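/- The risk-sensitive constrained MDP is equivalent to the optimization problem GO: maximizing Σ_{t=1}^{T-1} f_t(Π, Θ^Π_r, Q^Π_r) over all Markovian policies Π subject to f_t(Π, Θ^Π_c, Q^Π_c) ≤ B for all t ≤ T-1. Precisely, Π is feasible for one problem iff it is feasible for the other, the GO objective at Π equals (T-1)·J_r(Π, α_r), and the two problems have the same set of optimal policies. -/
import Mathlib


open Finset Real MeasureTheory

noncomputable section

variable {S A : Type*} [Fintype S] [Fintype A] [DecidableEq S] [DecidableEq A]

namespace RiskCMDP

/-- Probability weight of a full trajectory `(s, a)` of `N` transitions under policy `d`,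
kernel `p` and initial distribution `α`. -/
def trajWeight (N : ℕ) (α : S → ℝ) (d : ℕ → S → A → ℝ) (p : ℕ → S → A → S → ℝ)
    (s : Fin (N+1) → S) (a : Fin N → A) : ℝ :=
  α (s 0) * ∏ k : Fin N, d k (s k.castSucc) (a k) * p k (s k.castSucc) (a k) (s k.succ)

/-- Accumulated cost of a full trajectory, including terminal cost. -/
def totalCost (N : ℕ) (m : ℕ → S → A → S → ℝ) (mT : S → ℝ)
    (s : Fin (N+1) → S) (a : Fin N → A) : ℝ :=
  (∑ k : Fin N, m k (s k.castSucc) (a k) (s k.succ)) + mT (s (Fin.last N))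

/-- Risk-sensitive value `J_m(Π, α) = E[exp(Σ m_t + m_T)]`. -/
def J (N : ℕ) (α : S → ℝ) (d : ℕ → S → A → ℝ) (p : ℕ → S → A → S → ℝ)
    (m : ℕ → S → A → S → ℝ) (mT : S → ℝ) : ℝ :=
  ∑ s : Fin (N+1) → S, ∑ a : Fin N → A,
    trajWeight N α d p s a * Real.exp (totalCost N m mT s a)

/-- Forward factor `θ^Π_{m,t}(x) = E[exp(Σ_{k<t} m_k) 1{X_t = x}]` (0-based time `t`). -/
def theta (α : S → ℝ) (d : ℕ → S → A → ℝ) (p : ℕ → S → A → S → ℝ)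
    (m : ℕ → S → A → S → ℝ) (t : ℕ) (x : S) : ℝ :=
  ∑ s : Fin (t+1) → S, ∑ a : Fin t → A,
    (if s (Fin.last t) = x then
      α (s 0) * ∏ k : Fin t, (d k (s k.castSucc) (a k) * p k (s k.castSucc) (a k) (s k.succ)
        * Real.exp (m k (s k.castSucc) (a k) (s k.succ)))
     else 0)

/-- Backward factor with `r` remaining transitions (absolute time `N - r`). -/
def Qaux (N : ℕ) (d : ℕ → S → A → ℝ) (p : ℕ → S → A → S → ℝ)
    (m : ℕ → S → A → S → ℝ) (mT : S → ℝ) : ℕ → S → A → ℝ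
  | 0, x, _ => Real.exp (mT x)
  | (r+1), x, a =>
      ∑ x' : S, ∑ a' : A,
        Real.exp (m (N - (r+1)) x a x') * p (N - (r+1)) x a x'
          * d (N - r) x' a' * Qaux N d p m mT r x' a'

/-- Backward factor `Q^Π_{m,t}(x,a)` at (0-based) time `t ≤ N`. -/
def Qb (N : ℕ) (d : ℕ → S → A → ℝ) (p : ℕ → S → A → S → ℝ)
    (m : ℕ → S → A → S → ℝ) (mT : S → ℝ) (t : ℕ) (x : S) (a : A) : ℝ :=
  Qaux N d p m mT (N - t) x a

/-- `f_t(Π̃, Θ^Π_m, Q^Π_m) = Σ_{x,a} θ^Π_{m,t}(x) d̃_t(x,a) Q^Π_{m,t}(x,a)`. -/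
def fF (N : ℕ) (α : S → ℝ) (d dtil : ℕ → S → A → ℝ) (p : ℕ → S → A → S → ℝ)
    (m : ℕ → S → A → S → ℝ) (mT : S → ℝ) (t : ℕ) : ℝ :=
  ∑ x : S, ∑ a : A, theta α d p m t x * dtil t x a * Qb N d p m mT t x a

/-- A Markovian randomized policy. -/
def isPolicy (d : ℕ → S → A → ℝ) : Prop :=
  (∀ t x a, 0 ≤ d t x a) ∧ ∀ t x, ∑ a : A, d t x a = 1

/-- A transition kernel. -/
def isKernel (p : ℕ → S → A → S → ℝ) : Prop :=
  (∀ t x a x', 0 ≤ p t x a x') ∧ ∀ t x a, ∑ x' : S, p t x a x' = 1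

/-- A probability distribution on states. -/
def isDist (α : S → ℝ) : Prop := (∀ x, 0 ≤ α x) ∧ ∑ x : S, α x = 1

/-- The one-step modification `η^t_{Π,Π̃}`: follow `d` except at epoch `t`, where `dtil` is used. -/
def update (d dtil : ℕ → S → A → ℝ) (t : ℕ) : ℕ → S → A → ℝ :=
  fun k => if k = t then dtil k else d k

/-- Feasibility for the risk-sensitive constrained MDP. -/
def feasible (N : ℕ) (αc : S → ℝ) (p : ℕ → S → A → S → ℝ) (c : ℕ → S → A → S → ℝ)
    (cT : S → ℝ) (B : ℝ) (d : ℕ → S → A → ℝ) : Prop :=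
  isPolicy d ∧ J N αc d p c cT ≤ B

/-- Optimality for the risk-sensitive constrained MDP. -/
def optimalCMDP (N : ℕ) (αr αc : S → ℝ) (p : ℕ → S → A → S → ℝ)
    (r c : ℕ → S → A → S → ℝ) (rT cT : S → ℝ) (B : ℝ) (d : ℕ → S → A → ℝ) : Prop :=
  feasible N αc p c cT B d ∧
    ∀ d', feasible N αc p c cT B d' → J N αr d' p r rT ≤ J N αr d p r rT

/-- Feasibility for the linear program `LP(Π)` with base policy `base`. -/
def LPfeas (N : ℕ) (αc : S → ℝ) (base : ℕ → S → A → ℝ) (p : ℕ → S → A → S → ℝ)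
    (c : ℕ → S → A → S → ℝ) (cT : S → ℝ) (B : ℝ) (dtil : ℕ → S → A → ℝ) : Prop :=
  isPolicy dtil ∧ ∀ t, t < N → fF N αc base dtil p c cT t ≤ B

/-- Objective of `LP(Π)`: `Σ_t f_t(Π̃, Θ^Π_r, Q^Π_r)`. -/
def LPobj (N : ℕ) (αr : S → ℝ) (base dtil : ℕ → S → A → ℝ) (p : ℕ → S → A → S → ℝ)
    (r : ℕ → S → A → S → ℝ) (rT : S → ℝ) : ℝ :=
  ∑ t ∈ Finset.range N, fF N αr base dtil p r rT t

/-- `dtil ∈ M(base)`: `dtil` is an optimal solution of `LP(base)`. -/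
def LPopt (N : ℕ) (αr αc : S → ℝ) (base : ℕ → S → A → ℝ) (p : ℕ → S → A → S → ℝ)
    (r c : ℕ → S → A → S → ℝ) (rT cT : S → ℝ) (B : ℝ) (dtil : ℕ → S → A → ℝ) : Prop :=
  LPfeas N αc base p c cT B dtil ∧
    ∀ d', LPfeas N αc base p c cT B d' →
      LPobj N αr base d' p r rT ≤ LPobj N αr base dtil p r rT

/-- Feasibility for the GO problem. -/
def GOfeas (N : ℕ) (αc : S → ℝ) (p : ℕ → S → A → S → ℝ) (c : ℕ → S → A → S → ℝ)
    (cT : S → ℝ) (B : ℝ) (d : ℕ → S → A → ℝ) : Prop :=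
  isPolicy d ∧ ∀ t, t < N → fF N αc d d p c cT t ≤ B

/-- Optimality for the GO problem. -/
def GOopt (N : ℕ) (αr αc : S → ℝ) (p : ℕ → S → A → S → ℝ) (r c : ℕ → S → A → S → ℝ)
    (rT cT : S → ℝ) (B : ℝ) (d : ℕ → S → A → ℝ) : Prop :=
  GOfeas N αc p c cT B d ∧
    ∀ d', GOfeas N αc p c cT B d' →
      LPobj N αr d' d' p r rT ≤ LPobj N αr d d p r rT


/-! ### Auxiliary lemmas -/

lemma sum_pi_snoc {σ : Type*} [Fintype σ] {n : ℕ} (g : (Fin (n+1) → σ) → ℝ) :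
    ∑ f : Fin (n+1) → σ, g f = ∑ x : σ, ∑ f : Fin n → σ, g (Fin.snoc f x) := by
  rw [← (Fin.snocEquiv (fun _ => σ)).sum_comp g, Fintype.sum_prod_type]
  rfl

lemma J_eq (N : ℕ) (α : S → ℝ) (d : ℕ → S → A → ℝ) (p : ℕ → S → A → S → ℝ)
    (m : ℕ → S → A → S → ℝ) (mT : S → ℝ) :
    J N α d p m mT = ∑ s : Fin (N+1) → S, ∑ a : Fin N → A,
      α (s 0) * ((∏ k : Fin N, (d k (s k.castSucc) (a k) * p k (s k.castSucc) (a k) (s k.succ)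
        * Real.exp (m k (s k.castSucc) (a k) (s k.succ)))) * Real.exp (mT (s (Fin.last N)))) := by
  unfold J trajWeight totalCost
  refine Finset.sum_congr rfl fun s _ => Finset.sum_congr rfl fun a _ => ?_
  simp only [Real.exp_add, Real.exp_sum, Finset.prod_mul_distrib]
  ring

lemma J_theta (N : ℕ) (α : S → ℝ) (d : ℕ → S → A → ℝ) (p : ℕ → S → A → S → ℝ)
    (m : ℕ → S → A → S → ℝ) (mT : S → ℝ) :
    J N α d p m mT = ∑ x : S, theta α d p m N x * Real.exp (mT x) := by
  rw [J_eq]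
  unfold theta
  simp only [Finset.sum_mul, ite_mul, zero_mul]
  conv_rhs => rw [Finset.sum_comm]
  refine Finset.sum_congr rfl fun s _ => ?_
  conv_rhs => rw [Finset.sum_comm]
  refine Finset.sum_congr rfl fun a _ => ?_
  simp only [Finset.sum_ite_eq, Finset.mem_univ, if_true]
  ring

lemma theta_succ (α : S → ℝ) (d : ℕ → S → A → ℝ) (p : ℕ → S → A → S → ℝ)
    (m : ℕ → S → A → S → ℝ) (t : ℕ) (x' : S) :
    theta α d p m (t+1) x' =
      ∑ x : S, ∑ a : A, theta α d p m t x * (d t x a * p t x a x' * Real.exp (m t x a x')) := by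
  unfold theta
  rw [sum_pi_snoc]
  conv_lhs => enter [2, sL, 2, s']; rw [sum_pi_snoc]
  simp only [Fin.snoc_last, Fin.succ_last, Fin.succ_castSucc, Fin.snoc_castSucc,
    Fin.prod_univ_castSucc, Fin.coe_castSucc, Fin.val_last,
    show ∀ (f : Fin (t+1) → S) (y : S), (Fin.snoc f y : Fin (t+2) → S) 0 = f 0 from
      fun f y => by rw [← Fin.castSucc_zero, Fin.snoc_castSucc]]
  conv_lhs => rw [Finset.sum_comm]
  conv_lhs => enter [2, s]; rw [Finset.sum_comm]
  conv_lhs => enter [2, s, 2, aL]; rw [Finset.sum_comm]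
  simp only [Finset.sum_mul, ite_mul, zero_mul]
  conv_rhs => rw [Finset.sum_comm]
  conv_rhs => enter [2, aL]; rw [Finset.sum_comm]
  conv_rhs => enter [2, aL, 2, s]; rw [Finset.sum_comm]
  conv_rhs => rw [Finset.sum_comm]
  simp only [Finset.sum_ite_eq, Finset.sum_ite_eq', Finset.mem_univ, if_true]
  refine Finset.sum_congr rfl fun s _ => Finset.sum_congr rfl fun aL _ =>
    Finset.sum_congr rfl fun a' _ => ?_
  ring

lemma fF_step (N : ℕ) (α : S → ℝ) (d : ℕ → S → A → ℝ) (p : ℕ → S → A → S → ℝ)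
    (m : ℕ → S → A → S → ℝ) (mT : S → ℝ) (t : ℕ) (ht : t < N) :
    fF N α d d p m mT t = fF N α d d p m mT (t+1) := by
  unfold fF Qb
  have h1 : N - t = (N - (t+1)) + 1 := by omega
  have h2 : N - ((N - (t+1)) + 1) = t := by omega
  have h3 : N - (N - (t+1)) = t + 1 := by omega
  rw [h1]
  simp only [Qaux, h2, h3, theta_succ]
  simp only [Finset.mul_sum, Finset.sum_mul]
  conv_lhs => enter [2, x]; rw [Finset.sum_comm]
  conv_lhs => rw [Finset.sum_comm]
  conv_lhs => enter [2, x', 2, x]; rw [Finset.sum_comm]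
  conv_lhs => enter [2, x']; rw [Finset.sum_comm]
  refine Finset.sum_congr rfl fun x' _ => Finset.sum_congr rfl fun a' _ =>
    Finset.sum_congr rfl fun x _ => Finset.sum_congr rfl fun a _ => ?_
  ring

lemma fF_last (N : ℕ) (α : S → ℝ) (d : ℕ → S → A → ℝ)
    (hd : ∀ t x, ∑ a : A, d t x a = 1) (p : ℕ → S → A → S → ℝ)
    (m : ℕ → S → A → S → ℝ) (mT : S → ℝ) :
    fF N α d d p m mT N = J N α d p m mT := by
  unfold fF Qb
  rw [J_theta]
  simp only [Nat.sub_self, Qaux]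
  refine Finset.sum_congr rfl fun x _ => ?_
  calc ∑ a : A, theta α d p m N x * d N x a * Real.exp (mT x)
      = (∑ a : A, d N x a) * (theta α d p m N x * Real.exp (mT x)) := by
        rw [Finset.sum_mul]; exact Finset.sum_congr rfl fun a _ => by ring
    _ = theta α d p m N x * Real.exp (mT x) := by rw [hd N x, one_mul]

lemma fF_eq_J (N : ℕ) (α : S → ℝ) (d : ℕ → S → A → ℝ)
    (hd : ∀ t x, ∑ a : A, d t x a = 1) (p : ℕ → S → A → S → ℝ)
    (m : ℕ → S → A → S → ℝ) (mT : S → ℝ) (t : ℕ) (ht : t ≤ N) :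
    fF N α d d p m mT t = J N α d p m mT := by
  obtain ⟨k, rfl⟩ : ∃ k, N = t + k := ⟨N - t, by omega⟩
  clear ht
  induction k generalizing t with
  | zero => simpa using fF_last t α d hd p m mT
  | succ k ih =>
      have h : t + (k+1) = (t+1) + k := by omega
      rw [fF_step _ _ _ _ _ _ t (by omega), h]
      exact ih (t+1)

/-- equivalence of the risk-sensitive constrained MDP and the GO problem:
same feasible policies, GO objective equals `(T-1)·J_r(Π, α_r)`, same optimal policies. -/
theorem GO_equivalence (N : ℕ) (hN : 0 < N) (αr αc : S → ℝ) (p : ℕ → S → A → S → ℝ)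
    (r c : ℕ → S → A → S → ℝ) (rT cT : S → ℝ) (B : ℝ)
    (hp : isKernel p) (hαr : isDist αr) (hαc : isDist αc) :
    (∀ d : ℕ → S → A → ℝ, isPolicy d →
      (feasible N αc p c cT B d ↔ GOfeas N αc p c cT B d)) ∧
    (∀ d : ℕ → S → A → ℝ, isPolicy d →
      LPobj N αr d d p r rT = (N : ℝ) * J N αr d p r rT) ∧
    (∀ d : ℕ → S → A → ℝ,
      optimalCMDP N αr αc p r c rT cT B d ↔ GOopt N αr αc p r c rT cT B d) := by
  have key : ∀ (β : S → ℝ) (d : ℕ → S → A → ℝ), isPolicy d →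
      ∀ (m : ℕ → S → A → S → ℝ) (mT : S → ℝ) (t : ℕ), t < N →
        fF N β d d p m mT t = J N β d p m mT := by
    intro β d hd m mT t ht
    exact fF_eq_J N β d hd.2 p m mT t ht.le
  have feq : ∀ d : ℕ → S → A → ℝ, isPolicy d →
      (feasible N αc p c cT B d ↔ GOfeas N αc p c cT B d) := by
    intro d hd
    constructor
    · rintro ⟨h1, h2⟩
      exact ⟨h1, fun t ht => by rw [key αc d hd c cT t ht]; exact h2⟩
    · rintro ⟨h1, h2⟩
      refine ⟨h1, ?_⟩
      rw [← key αc d hd c cT 0 hN]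
      exact h2 0 hN
  have obj : ∀ d : ℕ → S → A → ℝ, isPolicy d →
      LPobj N αr d d p r rT = (N : ℝ) * J N αr d p r rT := by
    intro d hd
    unfold LPobj
    rw [Finset.sum_congr rfl fun t ht => key αr d hd r rT t (Finset.mem_range.mp ht)]
    rw [Finset.sum_const, Finset.card_range, nsmul_eq_mul]
  refine ⟨feq, obj, fun d => ?_⟩
  constructor
  · rintro ⟨hdfeas, hopt⟩
    refine ⟨(feq d hdfeas.1).mp hdfeas, fun d' hd' => ?_⟩
    rw [obj d' hd'.1, obj d hdfeas.1]
    exact mul_le_mul_of_nonneg_left (hopt d' ((feq d' hd'.1).mpr hd')) (Nat.cast_nonneg N)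
  · rintro ⟨hdfeas, hopt⟩
    have hdf : feasible N αc p c cT B d := (feq d hdfeas.1).mpr hdfeas
    refine ⟨hdf, fun d' hd' => ?_⟩
    have h := hopt d' ((feq d' hd'.1).mp hd')
    rw [obj d' hd'.1, obj d hdfeas.1] at h
    have hNpos : (0:ℝ) < N := by exact_mod_cast hN
    exact le_of_mul_le_mul_left h hNpos


end RiskCMDP
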